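/- arXiv:2509.01829 — 4 statements merged into one kernel-verified Lean document; each statement's English description precedes it below -/
import Mathlib

section
/- In a staggered adoption design, let unit and time fixed effects (α̂_i, ξ̂_t) be estimated by least squares on all untreated observations. For any unit i in treated cohort G_g (treated starting at period t_g), the imputed counterfactual at the first treatment period satisfies α̂_i + ξ̂_{t_g} = Ȳ_{i,pre_g} + (Ȳ_{C_{g,1},t_g} − Ȳ_{C_{g,1},pre_g}), where pre_g = {1,…,t_g−1}, C_{g,1} is the set of all units untreated at time t_g, Ȳ_{i,pre_g} is unit i's average outcome over pre_g, Ȳ_{C_{g,1},t_g} is the average outcome of C_{g,1} at time t_g, and Ȳ_{C_{g,1},pre_g} is the average outcome of C_{g,1} over pre_g. -/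
open Finset

lemma quad_zero (N S : ℝ) (hN : 0 ≤ N) (h : ∀ ε : ℝ, 0 ≤ ε ^ 2 * N - 2 * ε * S) : S = 0 := by
  by_contra hS
  have h1 := h (S / (N + 1))
  have hN1 : (0:ℝ) < N + 1 := by linarith
  have hS2 : 0 < S ^ 2 := by positivity
  rw [div_pow] at h1
  have h2 : 0 ≤ (S ^ 2 / (N+1)^2 * N - 2 * (S / (N+1)) * S) * (N+1)^2 :=
    mul_nonneg h1 (by positivity)
  have h3 : (S ^ 2 / (N+1)^2 * N - 2 * (S / (N+1)) * S) * (N+1)^2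
      = S^2 * N - 2 * S^2 * (N+1) := by field_simp
  rw [h3] at h2
  nlinarith

lemma sum_sq_min {ι : Type*} (s : Finset ι) (f g : ι → ℝ)
    (h : ∀ ε : ℝ, ∑ p ∈ s, f p ^ 2 ≤ ∑ p ∈ s, (f p - ε * g p) ^ 2) :
    ∑ p ∈ s, f p * g p = 0 := by
  apply quad_zero (∑ p ∈ s, g p ^ 2) _ (by positivity)
  intro ε
  have expand : ∑ p ∈ s, (f p - ε * g p) ^ 2
      = ∑ p ∈ s, f p ^ 2 - 2 * ε * ∑ p ∈ s, f p * g p + ε ^ 2 * ∑ p ∈ s, g p ^ 2 := by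
    rw [Finset.mul_sum, Finset.mul_sum, ← Finset.sum_sub_distrib, ← Finset.sum_add_distrib]
    exact Finset.sum_congr rfl fun p _ => by ring
  have := h ε
  rw [expand] at this
  linarith


/-- The set of untreated observations `(i,t)` with `t ∈ {1,…,T}` and `t < adopt i`. -/
def untreatedObs {U : Type*} [Fintype U] (T : ℕ) (adopt : U → ℕ) : Finset (U × ℕ) :=
  (Finset.univ ×ˢ Finset.Icc 1 T).filter (fun p => p.2 < adopt p.1)

/-- Lemma 1: for any treated unit `i` (cohort treated at `t_g = adopt i ≤ T`), the
imputed counterfactual at its first treated period equals the block-DiD expression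
built from the pre-period average of `i` and the trend of the initial control group
`C_{g,1} = {j : adopt i < adopt j}`. -/
theorem imputation_first_period_blockDiD {U : Type*} [Fintype U] [DecidableEq U]
    (T : ℕ) (adopt : U → ℕ) (Y : U → ℕ → ℝ)
    (hadopt : ∀ i, 2 ≤ adopt i)
    (hnever : ∃ j, T < adopt j)
    (α : U → ℝ) (ξ : ℕ → ℝ)
    (hmin : ∀ (α' : U → ℝ) (ξ' : ℕ → ℝ),
      ∑ p ∈ untreatedObs T adopt, (Y p.1 p.2 - α p.1 - ξ p.2) ^ 2
        ≤ ∑ p ∈ untreatedObs T adopt, (Y p.1 p.2 - α' p.1 - ξ' p.2) ^ 2)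
    (i : U) (hiT : adopt i ≤ T) :
    α i + ξ (adopt i) =
      (∑ k ∈ Finset.Icc 1 (adopt i - 1), Y i k) / ((adopt i - 1 : ℕ) : ℝ)
      + ((∑ j ∈ Finset.univ.filter (fun j : U => adopt i < adopt j), Y j (adopt i)) /
            ((Finset.univ.filter (fun j : U => adopt i < adopt j)).card : ℝ)
         - (∑ j ∈ Finset.univ.filter (fun j : U => adopt i < adopt j),
              ∑ k ∈ Finset.Icc 1 (adopt i - 1), Y j k) /
            (((Finset.univ.filter (fun j : U => adopt i < adopt j)).card : ℝ) *
              ((adopt i - 1 : ℕ) : ℝ))) := by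
  set r : U × ℕ → ℝ := fun p => Y p.1 p.2 - α p.1 - ξ p.2 with hr
  -- Row first-order conditions
  have hrow : ∀ j : U,
      ∑ k ∈ (Finset.Icc 1 T).filter (fun k => k < adopt j), (Y j k - α j - ξ k) = 0 := by
    intro j
    have key : ∑ p ∈ untreatedObs T adopt, r p * (if p.1 = j then (1:ℝ) else 0) = 0 := by
      apply sum_sq_min
      intro ε
      have := hmin (fun u => α u + ε * (if u = j then 1 else 0)) ξ
      calc ∑ p ∈ untreatedObs T adopt, r p ^ 2
          ≤ ∑ p ∈ untreatedObs T adopt,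
              (Y p.1 p.2 - (α p.1 + ε * (if p.1 = j then 1 else 0)) - ξ p.2) ^ 2 := this
        _ = ∑ p ∈ untreatedObs T adopt, (r p - ε * (if p.1 = j then 1 else 0)) ^ 2 :=
            Finset.sum_congr rfl fun p _ => by simp only [hr]; ring
    have hset : (untreatedObs T adopt).filter (fun p => p.1 = j)
        = {j} ×ˢ ((Finset.Icc 1 T).filter (fun k => k < adopt j)) := by
      ext ⟨a, b⟩
      simp only [untreatedObs, Finset.mem_filter, Finset.mem_product, Finset.mem_singleton,
        Finset.mem_univ, true_and]
      constructor
      · rintro ⟨⟨hb, hlt⟩, rfl⟩; exact ⟨rfl, hb, hlt⟩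
      · rintro ⟨rfl, hb, hlt⟩; exact ⟨⟨hb, hlt⟩, rfl⟩
    calc ∑ k ∈ (Finset.Icc 1 T).filter (fun k => k < adopt j), (Y j k - α j - ξ k)
        = ∑ p ∈ {j} ×ˢ ((Finset.Icc 1 T).filter (fun k => k < adopt j)), r p := by
          rw [Finset.sum_product, Finset.sum_singleton]
      _ = ∑ p ∈ (untreatedObs T adopt).filter (fun p => p.1 = j), r p := by rw [hset]
      _ = ∑ p ∈ untreatedObs T adopt, r p * (if p.1 = j then 1 else 0) := by
          rw [Finset.sum_filter]
          exact Finset.sum_congr rfl fun p _ => by split <;> simp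
      _ = 0 := key
  -- Column first-order conditions
  have hcol : ∀ k ∈ Finset.Icc 1 T,
      ∑ j ∈ Finset.univ.filter (fun j => k < adopt j), (Y j k - α j - ξ k) = 0 := by
    intro k hk
    have key : ∑ p ∈ untreatedObs T adopt, r p * (if p.2 = k then (1:ℝ) else 0) = 0 := by
      apply sum_sq_min
      intro ε
      have := hmin α (fun t => ξ t + ε * (if t = k then 1 else 0))
      calc ∑ p ∈ untreatedObs T adopt, r p ^ 2
          ≤ ∑ p ∈ untreatedObs T adopt,
              (Y p.1 p.2 - α p.1 - (ξ p.2 + ε * (if p.2 = k then 1 else 0))) ^ 2 := this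
        _ = ∑ p ∈ untreatedObs T adopt, (r p - ε * (if p.2 = k then 1 else 0)) ^ 2 :=
            Finset.sum_congr rfl fun p _ => by simp only [hr]; ring
    have hset : (untreatedObs T adopt).filter (fun p => p.2 = k)
        = (Finset.univ.filter (fun j => k < adopt j)) ×ˢ {k} := by
      ext ⟨a, b⟩
      simp only [untreatedObs, Finset.mem_filter, Finset.mem_product, Finset.mem_singleton,
        Finset.mem_univ, true_and]
      constructor
      · rintro ⟨⟨hb, hlt⟩, rfl⟩; exact ⟨hlt, rfl⟩
      · rintro ⟨hlt, rfl⟩; exact ⟨⟨hk, hlt⟩, rfl⟩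
    calc ∑ j ∈ Finset.univ.filter (fun j => k < adopt j), (Y j k - α j - ξ k)
        = ∑ p ∈ (Finset.univ.filter (fun j => k < adopt j)) ×ˢ {k}, r p := by
          rw [Finset.sum_product]
          exact Finset.sum_congr rfl fun j _ => by rw [Finset.sum_singleton]
      _ = ∑ p ∈ (untreatedObs T adopt).filter (fun p => p.2 = k), r p := by rw [hset]
      _ = ∑ p ∈ untreatedObs T adopt, r p * (if p.2 = k then 1 else 0) := by
          rw [Finset.sum_filter]
          exact Finset.sum_congr rfl fun p _ => by split <;> simp
      _ = 0 := key
  -- Notation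
  have h2 : 2 ≤ adopt i := hadopt i
  set m : ℕ := adopt i - 1 with hm
  set C : Finset U := Finset.univ.filter (fun j : U => adopt i < adopt j) with hCdef
  have hm1 : 1 ≤ m := by omega
  have hmT : m ≤ T := by omega
  have hCne : 0 < C.card := by
    obtain ⟨j0, hj0⟩ := hnever
    exact Finset.card_pos.mpr ⟨j0, by simp [hCdef]; omega⟩
  set n : ℕ := C.card with hn
  -- Row FOC for units with adopt j ≤ adopt i, over Icc 1 (adopt j - 1)
  have hrow' : ∀ j : U, adopt j ≤ adopt i →
      ∑ k ∈ (Finset.Icc 1 m).filter (fun k => k < adopt j), (Y j k - α j - ξ k) = 0 := by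
    intro j hj
    have hseteq : (Finset.Icc 1 m).filter (fun k => k < adopt j)
        = (Finset.Icc 1 T).filter (fun k => k < adopt j) := by
      ext k
      simp only [Finset.mem_filter, Finset.mem_Icc]
      omega
    rw [hseteq]; exact hrow j
  -- Equation A
  have hA : ∑ k ∈ Finset.Icc 1 m, (Y i k - α i - ξ k) = 0 := by
    have := hrow' i le_rfl
    have hseteq : (Finset.Icc 1 m).filter (fun k => k < adopt i) = Finset.Icc 1 m := by
      apply Finset.filter_true_of_mem
      intro k hk
      simp only [Finset.mem_Icc] at hk
      omega
    rwa [hseteq] at this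
  -- Equation B
  have hB : ∑ j ∈ C, (Y j (adopt i) - α j - ξ (adopt i)) = 0 :=
    hcol (adopt i) (by simp only [Finset.mem_Icc]; omega)
  -- Equation C
  have hCeq : ∑ j ∈ C, ∑ k ∈ Finset.Icc 1 m, (Y j k - α j - ξ k) = 0 := by
    have step : ∀ k ∈ Finset.Icc 1 m,
        ∑ j ∈ C, (Y j k - α j - ξ k)
          + ∑ j ∈ Finset.univ.filter (fun j => k < adopt j ∧ adopt j ≤ adopt i),
              (Y j k - α j - ξ k) = 0 := by
      intro k hk
      simp only [Finset.mem_Icc] at hk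
      have hkT : k ∈ Finset.Icc 1 T := by simp only [Finset.mem_Icc]; omega
      have hsplit := Finset.sum_filter_add_sum_filter_not
        (Finset.univ.filter (fun j => k < adopt j)) (fun j => adopt i < adopt j)
        (fun j => Y j k - α j - ξ k)
      rw [Finset.filter_filter, Finset.filter_filter] at hsplit
      have e1 : Finset.univ.filter (fun j : U => k < adopt j ∧ adopt i < adopt j) = C := by
        ext j; simp only [hCdef, Finset.mem_filter, Finset.mem_univ, true_and]; omega
      have e2 : Finset.univ.filter (fun j : U => k < adopt j ∧ ¬ adopt i < adopt j)
          = Finset.univ.filter (fun j => k < adopt j ∧ adopt j ≤ adopt i) := by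
        ext j; simp only [Finset.mem_filter, Finset.mem_univ, true_and]; omega
      rw [e1, e2, hcol k hkT] at hsplit
      linarith [hsplit]
    have hsum : ∑ k ∈ Finset.Icc 1 m, (∑ j ∈ C, (Y j k - α j - ξ k)
          + ∑ j ∈ Finset.univ.filter (fun j => k < adopt j ∧ adopt j ≤ adopt i),
              (Y j k - α j - ξ k)) = 0 :=
      Finset.sum_eq_zero step
    rw [Finset.sum_add_distrib] at hsum
    -- second piece is zero by swapping sums and using row FOCs
    have hsecond : ∑ k ∈ Finset.Icc 1 m,
        ∑ j ∈ Finset.univ.filter (fun j => k < adopt j ∧ adopt j ≤ adopt i),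
          (Y j k - α j - ξ k) = 0 := by
      have e3 : ∀ k, ∑ j ∈ Finset.univ.filter (fun j => k < adopt j ∧ adopt j ≤ adopt i),
            (Y j k - α j - ξ k)
          = ∑ j : U, (if k < adopt j ∧ adopt j ≤ adopt i then Y j k - α j - ξ k else 0) :=
        fun k => Finset.sum_filter _ _
      rw [Finset.sum_congr rfl fun k _ => e3 k, Finset.sum_comm]
      apply Finset.sum_eq_zero
      intro j _
      by_cases hj : adopt j ≤ adopt i
      · have : ∑ k ∈ Finset.Icc 1 m, (if k < adopt j ∧ adopt j ≤ adopt i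
              then Y j k - α j - ξ k else 0)
            = ∑ k ∈ (Finset.Icc 1 m).filter (fun k => k < adopt j), (Y j k - α j - ξ k) := by
          rw [Finset.sum_filter]
          exact Finset.sum_congr rfl fun k _ => by
            by_cases hk : k < adopt j <;> simp [hk, hj]
        rw [this]; exact hrow' j hj
      · apply Finset.sum_eq_zero
        intro k _
        rw [if_neg (by tauto)]
    rw [hsecond, add_zero] at hsum
    rw [Finset.sum_comm]; exact hsum
  -- Expand the three equations
  have cardIcc : (Finset.Icc 1 m).card = m := by rw [Nat.card_Icc]; omega
  have eA : ∑ k ∈ Finset.Icc 1 m, Y i k = (m : ℝ) * α i + ∑ k ∈ Finset.Icc 1 m, ξ k := by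
    rw [Finset.sum_sub_distrib, Finset.sum_sub_distrib, Finset.sum_const, cardIcc,
      nsmul_eq_mul] at hA
    linarith
  have eB : ∑ j ∈ C, Y j (adopt i) = ∑ j ∈ C, α j + (n : ℝ) * ξ (adopt i) := by
    rw [Finset.sum_sub_distrib, Finset.sum_sub_distrib, Finset.sum_const, ← hn,
      nsmul_eq_mul] at hB
    linarith
  have eC : ∑ j ∈ C, ∑ k ∈ Finset.Icc 1 m, Y j k
      = (m : ℝ) * ∑ j ∈ C, α j + (n : ℝ) * ∑ k ∈ Finset.Icc 1 m, ξ k := by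
    have expand : ∀ j ∈ C, ∑ k ∈ Finset.Icc 1 m, (Y j k - α j - ξ k)
        = ∑ k ∈ Finset.Icc 1 m, Y j k - (m : ℝ) * α j - ∑ k ∈ Finset.Icc 1 m, ξ k := by
      intro j _
      rw [Finset.sum_sub_distrib, Finset.sum_sub_distrib, Finset.sum_const, cardIcc,
        nsmul_eq_mul]
    rw [Finset.sum_congr rfl expand, Finset.sum_sub_distrib, Finset.sum_sub_distrib,
      Finset.sum_const, ← hn, nsmul_eq_mul, ← Finset.mul_sum] at hCeq
    linarith
  -- Final algebra
  have hm0 : ((m : ℕ) : ℝ) ≠ 0 := Nat.cast_ne_zero.mpr (by omega)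
  have hn0 : ((n : ℕ) : ℝ) ≠ 0 := Nat.cast_ne_zero.mpr (by omega)
  rw [eA, eB, eC]
  field_simp
  ring
end

section
/- Fix a destination index k and positive cohort sizes N_{g+1},…,N_G, N_∞. Define v_{g,j} = N_j / (Σ_{l>g} N_l + N_∞) and w_k = N_k / (Σ_{l≥k} N_l + N_∞). Then the recursion C_{g,k} = v_{g,k} + Σ_{j: g < j < k} v_{g,j} · C_{j,k}, for all g < k, has the unique solution C_{g,k} = w_k for every g < k. -/
open Finset

/-- Unique solution of the path-weight recursion: with
`v g j = N_j / (Σ_{l=g+1}^G N_l + N_∞)` and `w = N_k / (Σ_{l=k}^G N_l + N_∞)`,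
any `C` satisfying `C g = v g k + Σ_{g<j<k} v g j · C j` for all `g < k`
must equal `w` for every `g < k`. -/
theorem recursion_unique_solution (G k : ℕ) (hkG : k ≤ G)
    (N : ℕ → ℝ) (Ninf : ℝ) (hN : ∀ l, 0 < N l) (hinf : 0 < Ninf)
    (v : ℕ → ℕ → ℝ)
    (hv : ∀ g j, v g j = N j / ((∑ l ∈ Finset.Icc (g + 1) G, N l) + Ninf))
    (w : ℝ) (hw : w = N k / ((∑ l ∈ Finset.Icc k G, N l) + Ninf))
    (C : ℕ → ℝ)
    (hC : ∀ g, g < k → C g = v g k + ∑ j ∈ Finset.Ioo g k, v g j * C j) :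
    ∀ g, g < k → C g = w := by
  have key : ∀ d g, g < k → k - g ≤ d → C g = w := by
    intro d
    induction d with
    | zero => intro g hg h; omega
    | succ d ih =>
      intro g hgk hd
      have hC' := hC g hgk
      set A := ∑ j ∈ Finset.Ioo g k, N j with hA
      set B := (∑ l ∈ Finset.Icc k G, N l) + Ninf with hB
      have hBpos : 0 < B := by
        apply add_pos_of_nonneg_of_pos
        · exact Finset.sum_nonneg fun l _ => (hN l).le
        · exact hinf
      have hApos : 0 ≤ A := Finset.sum_nonneg fun l _ => (hN l).le
      have hsplit : (∑ l ∈ Finset.Icc (g + 1) G, N l) + Ninf = A + B := by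
        have h1 : Finset.Ioo g k ∪ Finset.Icc k G = Finset.Icc (g + 1) G := by
          ext a
          simp only [Finset.mem_union, Finset.mem_Ioo, Finset.mem_Icc]
          omega
        have h2 : Disjoint (Finset.Ioo g k) (Finset.Icc k G) := by
          simp only [Finset.disjoint_left, Finset.mem_Ioo, Finset.mem_Icc]
          intro a ha h; omega
        rw [← h1, Finset.sum_union h2, hA, hB]; ring
      rw [Finset.sum_congr rfl (fun j hj => by
        simp only [Finset.mem_Ioo] at hj
        rw [ih j hj.2 (by omega), hv g j])] at hC'
      rw [hv g k, hsplit] at hC'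
      have hsum2 : ∑ j ∈ Finset.Ioo g k, N j / (A + B) * w = A / (A + B) * w := by
        rw [← Finset.sum_mul, ← Finset.sum_div, hA]
      rw [hsum2] at hC'
      rw [hC', hw]
      have hABpos : 0 < A + B := by linarith
      field_simp
      ring
  intro g hg
  exact key (k - g) g hg le_rfl
end

section
/- In a staggered adoption design, the overall bias of the imputation estimator for cohort G_g at post-treatment relative period s (calendar time t = t_g + s − 1) satisfies δ^Imp_{G_g,s} = Δ^Imp_{G_g,s} + Σ_{k ∈ K_g(t)} w_k · Δ^Imp_{G_k, s_k(t)}, where K_g(t) = {k : t_g < t_k ≤ t}, s_k(t) = t − t_k + 1, and w_k = N_k / (Σ_{j=k}^G N_j + N_∞). -/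
/-!
Write `r = Y0 - (α + ξ)` for the residuals of the fit. The first-order conditions of the
least-squares problem say that on untreated cells `r` sums to zero along every unit and along
every period. The fixed effects cancel in a block bias, and the pre-period residuals of a cohort
and of its control group `{u < adopt}` vanish, so the mean residual of cohort `u` at `t` equals
its block bias plus the mean residual `B u` of its control group. Splitting the control group of
`u` into cohort `u + 1` and the control group of `u + 1` gives
`B u = weight13 (u + 1) * blockBias13 (u + 1) t + B (u + 1)`, which telescopes down from
`B t = 0`, the normal equation of period `t`.
-/

open Finset

/-- Untreated observations: pairs `(i,t)` with `t ∈ {1,…,T}` and `t < adopt i`. -/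
def untreatedObs13 {U : Type*} [Fintype U] (T : ℕ) (adopt : U → ℕ) : Finset (U × ℕ) :=
  (Finset.univ ×ˢ Finset.Icc 1 T).filter (fun p => p.2 < adopt p.1)

/-- Average of `Y0` over group `A` at period `t`. -/
noncomputable def avgAt13 {U : Type*} (Y0 : U → ℕ → ℝ) (A : Finset U) (t : ℕ) : ℝ :=
  (∑ i ∈ A, Y0 i t) / (A.card : ℝ)

/-- Average of `Y0` over group `A` and periods `P`. -/
noncomputable def avgOver13 {U : Type*} (Y0 : U → ℕ → ℝ) (A : Finset U) (P : Finset ℕ) : ℝ :=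
  (∑ i ∈ A, ∑ k ∈ P, Y0 i k) / ((A.card : ℝ) * (P.card : ℝ))

/-- Block bias of the cohort adopting at `u`, evaluated at calendar time `t` (for
the imputation estimator): trend of the cohort minus trend of its initial control
group `{j : u < adopt j}`, relative to the pre-period average over `{1,…,u−1}`. -/
noncomputable def blockBias13 {U : Type*} [Fintype U] (adopt : U → ℕ)
    (Y0 : U → ℕ → ℝ) (u t : ℕ) : ℝ :=
  (avgAt13 Y0 (Finset.univ.filter (fun i => adopt i = u)) t
      - avgOver13 Y0 (Finset.univ.filter (fun i => adopt i = u)) (Finset.Icc 1 (u - 1)))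
    - (avgAt13 Y0 (Finset.univ.filter (fun i => u < adopt i)) t
      - avgOver13 Y0 (Finset.univ.filter (fun i => u < adopt i)) (Finset.Icc 1 (u - 1)))

/-- Adjustment weight of the cohort adopting at `u`:
`w_u = N_u / (N_u + |{j : adopt j > u}|)`, i.e. `N_k / (Σ_{j=k}^G N_j + N_∞)`. -/
noncomputable def weight13 {U : Type*} [Fintype U] (adopt : U → ℕ) (u : ℕ) : ℝ :=
  ((Finset.univ.filter (fun i : U => adopt i = u)).card : ℝ) /
    (((Finset.univ.filter (fun i : U => adopt i = u)).card : ℝ) +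
      ((Finset.univ.filter (fun i : U => u < adopt i)).card : ℝ))

theorem sum_mul_eq_zero_of_forall_sum_sq_le {ι : Type*} (s : Finset ι) (e d : ι → ℝ)
    (h : ∀ ε : ℝ, ∑ p ∈ s, e p ^ 2 ≤ ∑ p ∈ s, (e p - ε * d p) ^ 2) :
    ∑ p ∈ s, e p * d p = 0 := by
  set S := ∑ p ∈ s, e p * d p
  set M := ∑ p ∈ s, d p ^ 2
  have hM : 0 ≤ M := sum_nonneg fun p _ => sq_nonneg _
  have hquad (ε : ℝ) : 2 * ε * S ≤ ε ^ 2 * M := by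
    have hexp : ∑ p ∈ s, (e p - ε * d p) ^ 2 = ∑ p ∈ s, e p ^ 2 - 2 * ε * S + ε ^ 2 * M := by
      simp only [S, M, mul_sum, ← sum_sub_distrib, ← sum_add_distrib]
      exact sum_congr rfl fun _ _ => by ring
    linarith [h ε]
  have key := hquad (S / (M + 1))
  field_simp at key
  have : S ^ 2 = 0 := le_antisymm (by nlinarith) (sq_nonneg S)
  exact pow_eq_zero_iff two_ne_zero |>.mp this

def twfeResidual {U : Type*} (Y0 : U → ℕ → ℝ) (α : U → ℝ) (ξ : ℕ → ℝ) (i : U) (k : ℕ) : ℝ :=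
  Y0 i k - (α i + ξ k)

theorem sum_twfeResidual_mul_eq_zero {U : Type*} (s : Finset (U × ℕ)) (Y : U → ℕ → ℝ)
    (α : U → ℝ) (ξ : ℕ → ℝ)
    (hmin : ∀ (α' : U → ℝ) (ξ' : ℕ → ℝ),
      ∑ p ∈ s, (Y p.1 p.2 - α p.1 - ξ p.2) ^ 2 ≤ ∑ p ∈ s, (Y p.1 p.2 - α' p.1 - ξ' p.2) ^ 2)
    (a : U → ℝ) (b : ℕ → ℝ) :
    ∑ p ∈ s, twfeResidual Y α ξ p.1 p.2 * (a p.1 + b p.2) = 0 := by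
  refine sum_mul_eq_zero_of_forall_sum_sq_le s _ _ fun ε => ?_
  convert hmin (fun i => α i + ε * a i) (fun k => ξ k + ε * b k) using 1
  · simp only [twfeResidual, sub_add_eq_sub_sub]
  · exact sum_congr rfl fun _ _ => by simp only [twfeResidual]; ring

section

variable {U : Type*}

theorem card_mul_avgAt13 (f : U → ℕ → ℝ) (A : Finset U) (t : ℕ) :
    (A.card : ℝ) * avgAt13 f A t = ∑ i ∈ A, f i t := by
  rcases A.eq_empty_or_nonempty with rfl | hA
  · simp
  · exact mul_div_cancel₀ _ (by positivity)

theorem avgAt13_add_twoWay (r : U → ℕ → ℝ) (α : U → ℝ) (ξ : ℕ → ℝ) {A : Finset U}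
    (hA : A.Nonempty) (t : ℕ) :
    avgAt13 (fun i k => r i k + (α i + ξ k)) A t
      = avgAt13 r A t + (∑ i ∈ A, α i) / A.card + ξ t := by
  have : (A.card : ℝ) ≠ 0 := by positivity
  simp only [avgAt13, sum_add_distrib, sum_const, nsmul_eq_mul]
  field_simp
  ring

theorem avgOver13_add_twoWay (r : U → ℕ → ℝ) (α : U → ℝ) (ξ : ℕ → ℝ) {A : Finset U}
    {P : Finset ℕ} (hA : A.Nonempty) (hP : P.Nonempty) :
    avgOver13 (fun i k => r i k + (α i + ξ k)) A P
      = avgOver13 r A P + (∑ i ∈ A, α i) / A.card + (∑ k ∈ P, ξ k) / P.card := by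
  have : (A.card : ℝ) ≠ 0 := by positivity
  have : (P.card : ℝ) ≠ 0 := by positivity
  simp only [avgOver13, sum_add_distrib, sum_const, nsmul_eq_mul, ← mul_sum]
  field_simp
  ring

end

section

variable {U : Type*} [Fintype U]

theorem blockBias13_add_twoWay (adopt : U → ℕ) (r : U → ℕ → ℝ) (α : U → ℝ) (ξ : ℕ → ℝ)
    {u : ℕ} (hu : 2 ≤ u) (hA : ({i | adopt i = u} : Finset U).Nonempty)
    (hB : ({i | u < adopt i} : Finset U).Nonempty) (t : ℕ) :
    blockBias13 adopt (fun i k => r i k + (α i + ξ k)) u t = blockBias13 adopt r u t := by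
  have hP : (Icc 1 (u - 1)).Nonempty := nonempty_Icc.mpr (by omega)
  simp only [blockBias13, avgAt13_add_twoWay _ _ _ hA, avgAt13_add_twoWay _ _ _ hB,
    avgOver13_add_twoWay _ _ _ hA hP, avgOver13_add_twoWay _ _ _ hB hP]
  ring

theorem blockBias13_eq_blockBias13_twfeResidual (adopt : U → ℕ) (Y0 : U → ℕ → ℝ) (α : U → ℝ)
    (ξ : ℕ → ℝ) {u : ℕ} (hu : 2 ≤ u) (hA : ({i | adopt i = u} : Finset U).Nonempty)
    (hB : ({i | u < adopt i} : Finset U).Nonempty) (t : ℕ) :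
    blockBias13 adopt Y0 u t = blockBias13 adopt (twfeResidual Y0 α ξ) u t := by
  calc blockBias13 adopt Y0 u t
      = blockBias13 adopt (fun i k => twfeResidual Y0 α ξ i k + (α i + ξ k)) u t := by
        simp only [twfeResidual, sub_add_cancel]
    _ = blockBias13 adopt (twfeResidual Y0 α ξ) u t :=
        blockBias13_add_twoWay adopt _ α ξ hu hA hB t

theorem sum_untreatedObs13 (T : ℕ) (adopt : U → ℕ) (f : U × ℕ → ℝ) :
    ∑ p ∈ untreatedObs13 T adopt, f p = ∑ i, ∑ k ∈ Icc 1 T with k < adopt i, f (i, k) := by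
  simp only [untreatedObs13, sum_filter, sum_product]

theorem sum_untreatedObs13_comm (T : ℕ) (adopt : U → ℕ) (f : U × ℕ → ℝ) :
    ∑ p ∈ untreatedObs13 T adopt, f p = ∑ k ∈ Icc 1 T, ∑ i with k < adopt i, f (i, k) := by
  simp only [untreatedObs13, sum_filter, sum_product_right]

structure TWFENormalEquations (T : ℕ) (adopt : U → ℕ) (r : U → ℕ → ℝ) : Prop where
  unit : ∀ i, ∑ k ∈ Icc 1 T with k < adopt i, r i k = 0
  period : ∀ k ∈ Icc 1 T, ∑ i with k < adopt i, r i k = 0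

namespace TWFENormalEquations

variable {T : ℕ} {adopt : U → ℕ} {r : U → ℕ → ℝ}

theorem of_forall_le {Y : U → ℕ → ℝ} {α : U → ℝ} {ξ : ℕ → ℝ}
    (hmin : ∀ (α' : U → ℝ) (ξ' : ℕ → ℝ),
      ∑ p ∈ untreatedObs13 T adopt, (Y p.1 p.2 - α p.1 - ξ p.2) ^ 2
        ≤ ∑ p ∈ untreatedObs13 T adopt, (Y p.1 p.2 - α' p.1 - ξ' p.2) ^ 2) :
    TWFENormalEquations T adopt (twfeResidual Y α ξ) where
  unit i := by
    classical
    have h := sum_twfeResidual_mul_eq_zero _ Y α ξ hmin (fun j => if j = i then 1 else 0) 0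
    simpa [sum_untreatedObs13] using h
  period k hk := by
    have h := sum_twfeResidual_mul_eq_zero _ Y α ξ hmin 0 (fun m => if m = k then 1 else 0)
    simpa [sum_untreatedObs13_comm, hk] using h

theorem congr {r' : U → ℕ → ℝ} (h : TWFENormalEquations T adopt r)
    (hrr' : ∀ i k, k < adopt i → r i k = r' i k) :
    TWFENormalEquations T adopt r' where
  unit i := by
    rw [← h.unit i]
    exact sum_congr rfl fun k hk => (hrr' i k (mem_filter.mp hk).2).symm
  period k hk := by
    rw [← h.period k hk]
    exact sum_congr rfl fun i hi => (hrr' i k (mem_filter.mp hi).2).symm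

theorem sum_pre_eq_zero (h : TWFENormalEquations T adopt r) {i : U} (hi : adopt i ≤ T + 1) :
    ∑ k ∈ Icc 1 (adopt i - 1), r i k = 0 := by
  rw [← h.unit i]
  congr 1
  ext k
  simp only [mem_Icc, mem_filter]
  omega

theorem sum_later_sum_pre_eq_zero (h : TWFENormalEquations T adopt r) {u : ℕ}
    (hu : u ≤ T + 1) : ∑ i with u < adopt i, ∑ k ∈ Icc 1 (u - 1), r i k = 0 := by
  have hunit (i : U) : ∑ k ∈ Icc 1 (u - 1) with k < adopt i, r i k
      = if u < adopt i then ∑ k ∈ Icc 1 (u - 1), r i k else 0 := by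
    split_ifs with hi
    · rw [filter_true_of_mem fun k hk => by simp only [mem_Icc] at hk; omega]
    · rw [← h.sum_pre_eq_zero (i := i) (by omega)]
      congr 1
      ext k
      simp only [mem_Icc, mem_filter]
      omega
  have hperiod : ∑ k ∈ Icc 1 (u - 1), ∑ i with k < adopt i, r i k = 0 :=
    sum_eq_zero fun k hk => h.period k (by simp only [mem_Icc] at hk ⊢; omega)
  simp only [sum_filter] at hperiod hunit
  rw [sum_comm] at hperiod
  simpa only [hunit, ← sum_filter] using hperiod

variable {Y0 : U → ℕ → ℝ} {α : U → ℝ} {ξ : ℕ → ℝ}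

theorem avgAt13_cohort_eq (h : TWFENormalEquations T adopt (twfeResidual Y0 α ξ)) {u : ℕ}
    (hu : 2 ≤ u) (huT : u ≤ T + 1) (hA : ({i | adopt i = u} : Finset U).Nonempty)
    (hB : ({i | u < adopt i} : Finset U).Nonempty) (t : ℕ) :
    avgAt13 (twfeResidual Y0 α ξ) {i | adopt i = u} t
      = blockBias13 adopt Y0 u t + avgAt13 (twfeResidual Y0 α ξ) {i | u < adopt i} t := by
  have hpreA : avgOver13 (twfeResidual Y0 α ξ) {i | adopt i = u} (Icc 1 (u - 1)) = 0 := by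
    rw [avgOver13, sum_eq_zero fun i hi => ?_, zero_div]
    obtain ⟨-, hi⟩ := mem_filter.mp hi
    exact hi ▸ h.sum_pre_eq_zero (hi.trans_le huT)
  have hpreB : avgOver13 (twfeResidual Y0 α ξ) {i | u < adopt i} (Icc 1 (u - 1)) = 0 := by
    rw [avgOver13, h.sum_later_sum_pre_eq_zero huT, zero_div]
  rw [blockBias13_eq_blockBias13_twfeResidual adopt Y0 α ξ hu hA hB, blockBias13, hpreA, hpreB]
  ring

theorem avgAt13_later_eq_add (h : TWFENormalEquations T adopt (twfeResidual Y0 α ξ)) {u : ℕ}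
    (hu : 1 ≤ u) (huT : u ≤ T) (hB : ({i | u + 1 < adopt i} : Finset U).Nonempty) (t : ℕ) :
    avgAt13 (twfeResidual Y0 α ξ) {i | u < adopt i} t
      = weight13 adopt (u + 1) * blockBias13 adopt Y0 (u + 1) t
        + avgAt13 (twfeResidual Y0 α ξ) {i | u + 1 < adopt i} t := by
  classical
  set r := twfeResidual Y0 α ξ
  set A : Finset U := {i | adopt i = u + 1}
  set B : Finset U := {i | u + 1 < adopt i}
  have hsplit : ({i | u < adopt i} : Finset U) = A ∪ B := by
    ext i
    simp only [A, B, mem_filter, mem_union, mem_univ, true_and]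
    omega
  have hdisj : Disjoint A B := disjoint_filter.mpr fun i _ h1 h2 => by omega
  have hcohort : (A.card : ℝ) * avgAt13 r A t
      = A.card * (blockBias13 adopt Y0 (u + 1) t + avgAt13 r B t) := by
    rcases A.eq_empty_or_nonempty with hA | hA
    · simp [hA]
    · rw [h.avgAt13_cohort_eq (by omega) (by omega) hA hB]
  have hunion : ((A.card : ℝ) + B.card) * avgAt13 r (A ∪ B) t
      = A.card * avgAt13 r A t + B.card * avgAt13 r B t := by
    rw [← Nat.cast_add, ← card_union_of_disjoint hdisj, card_mul_avgAt13, card_mul_avgAt13,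
      card_mul_avgAt13, sum_union hdisj]
  have hAB : (A.card : ℝ) + B.card ≠ 0 := by
    have := hB.card_pos
    positivity
  rw [hsplit, weight13]
  apply mul_left_cancel₀ hAB
  rw [hunion, hcohort]
  field_simp
  ring

theorem avgAt13_later_eq_sum (h : TWFENormalEquations T adopt (twfeResidual Y0 α ξ)) {t : ℕ}
    (htT : t ≤ T) (hnever : ∃ j, t < adopt j) {u : ℕ} (hu : 1 ≤ u) (hut : u ≤ t) :
    avgAt13 (twfeResidual Y0 α ξ) {i | u < adopt i} t
      = ∑ w ∈ Ioc u t, weight13 adopt w * blockBias13 adopt Y0 w t := by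
  obtain ⟨j, hj⟩ := hnever
  refine Nat.decreasingInduction' (fun k hkt huk ih => ?_) hut ?_
  · rw [h.avgAt13_later_eq_add (by omega) (by omega) ⟨j, mem_filter.mpr ⟨mem_univ j, by omega⟩⟩ t,
      ih, ← sum_Ioc_consecutive _ k.le_succ hkt, Nat.Ioc_succ_singleton, sum_singleton]
  · rw [avgAt13, h.period t (mem_Icc.mpr ⟨by omega, htT⟩), zero_div, Ioc_self, sum_empty]

end TWFENormalEquations

end

theorem imputation_bias_decomposition_general {U : Type*} [Fintype U]
    (T : ℕ) (adopt : U → ℕ) (Y Y0 : U → ℕ → ℝ)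
    (hadopt : ∀ i, 2 ≤ adopt i)
    (hnever : ∃ j, T < adopt j)
    (hY : ∀ i t, t < adopt i → Y i t = Y0 i t)
    (α : U → ℝ) (ξ : ℕ → ℝ)
    (hmin : ∀ (α' : U → ℝ) (ξ' : ℕ → ℝ),
      ∑ p ∈ untreatedObs13 T adopt, (Y p.1 p.2 - α p.1 - ξ p.2) ^ 2
        ≤ ∑ p ∈ untreatedObs13 T adopt, (Y p.1 p.2 - α' p.1 - ξ' p.2) ^ 2)
    (tg s : ℕ) (hcoh : ∃ i, adopt i = tg)
    (hs : 1 ≤ s) (ht : tg + s - 1 ≤ T) :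
    (∑ i ∈ Finset.univ.filter (fun i => adopt i = tg),
        (Y0 i (tg + s - 1) - (α i + ξ (tg + s - 1)))) /
      ((Finset.univ.filter (fun i : U => adopt i = tg)).card : ℝ)
    = blockBias13 adopt Y0 tg (tg + s - 1)
      + ∑ u ∈ Finset.Ioc tg (tg + s - 1),
          weight13 adopt u * blockBias13 adopt Y0 u (tg + s - 1) := by
  obtain ⟨i₀, hi₀⟩ := hcoh
  obtain ⟨j, hj⟩ := hnever
  have htg : 2 ≤ tg := hi₀ ▸ hadopt i₀
  have hN : TWFENormalEquations T adopt (twfeResidual Y0 α ξ) :=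
    (TWFENormalEquations.of_forall_le hmin).congr fun i k hk => by
      simp only [twfeResidual, hY i k hk]
  rw [← hN.avgAt13_later_eq_sum ht ⟨j, by omega⟩ (by omega) (by omega)]
  exact hN.avgAt13_cohort_eq htg (by omega) ⟨i₀, mem_filter.mpr ⟨mem_univ i₀, hi₀⟩⟩
    ⟨j, mem_filter.mpr ⟨mem_univ j, by omega⟩⟩ _

/-- Bias decomposition for the imputation estimator (Proposition 1): the overall
bias of cohort `G_g` (adopting at `tg`) at post-treatment period `s` (calendar time
`t = tg + s − 1`) equals its own block bias plus the weighted sum of the block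
biases of the adjustment cohorts adopting in `(tg, t]`. -/
theorem imputation_bias_decomposition {U : Type*} [Fintype U] [DecidableEq U]
    (T : ℕ) (adopt : U → ℕ) (Y Y0 : U → ℕ → ℝ)
    (hadopt : ∀ i, 2 ≤ adopt i)
    (hnever : ∃ j, T < adopt j)
    (hY : ∀ i t, t < adopt i → Y i t = Y0 i t)
    (α : U → ℝ) (ξ : ℕ → ℝ)
    (hmin : ∀ (α' : U → ℝ) (ξ' : ℕ → ℝ),
      ∑ p ∈ untreatedObs13 T adopt, (Y p.1 p.2 - α p.1 - ξ p.2) ^ 2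
        ≤ ∑ p ∈ untreatedObs13 T adopt, (Y p.1 p.2 - α' p.1 - ξ' p.2) ^ 2)
    (tg s : ℕ) (htgT : tg ≤ T) (hcoh : ∃ i, adopt i = tg)
    (hs : 1 ≤ s) (ht : tg + s - 1 ≤ T) :
    (∑ i ∈ Finset.univ.filter (fun i => adopt i = tg),
        (Y0 i (tg + s - 1) - (α i + ξ (tg + s - 1)))) /
      ((Finset.univ.filter (fun i : U => adopt i = tg)).card : ℝ)
    = blockBias13 adopt Y0 tg (tg + s - 1)
      + ∑ u ∈ Finset.Ioc tg (tg + s - 1),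
          weight13 adopt u * blockBias13 adopt Y0 u (tg + s - 1) :=
  imputation_bias_decomposition_general T adopt Y Y0 hadopt hnever hY α ξ hmin tg s hcoh hs ht
end

section
/- In a staggered adoption design, the overall bias of the Callaway–Sant'Anna not-yet-treated estimator for cohort G_g at post-treatment relative period s (calendar time t = t_g + s − 1) satisfies δ^CS_{G_g,s} = Δ^CS_{G_g,s} + Σ_{k ∈ K_g(t)} w_k · (Δ^CS_{G_k, s_k(t)} − Δ^CS_{G_k, s_k(t_g−1)}), where K_g(t) = {k : t_g < t_k ≤ t}, s_k(u) = u − t_k + 1, and w_k = N_k/(Σ_{j=k}^G N_j + N_∞). -/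
/-!
Splitting the not-yet-treated group `{i | u < adopt i}` into cohort `u + 1` and
`{i | u + 1 < adopt i}` makes its trend the `w_{u+1}`-weighted mixture of the two trends, so
consecutive not-yet-treated trends differ by `w_{u+1}` times (trend of cohort `u + 1` minus trend
of its own initial control group). Telescoping from the initial control group `C_{g,1}` (`u = t_g`)
to `C_{g,s}` (`u = t`) turns the correction `τ(C_{g,1}) - τ(C_{g,s})` into the weighted sum, and
each summand is a difference of two block biases of `G_k`, in which the reference period `t_k - 1`
of `G_k` cancels.
-/

open Finset

/-- Average of `Y0` over group `A` at period `t`. -/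
noncomputable def avgAt14 {U : Type*} (Y0 : U → ℕ → ℝ) (A : Finset U) (t : ℕ) : ℝ :=
  (∑ i ∈ A, Y0 i t) / (A.card : ℝ)

/-- Block bias of the cohort adopting at `u` for the Callaway–Sant'Anna
not-yet-treated estimator, evaluated at calendar time `t'`: trend of the cohort
minus trend of its initial control group `{j : u < adopt j}`, with reference
period `u − 1` (the last pre-treatment period of the cohort). -/
noncomputable def blockBiasCS {U : Type*} [Fintype U] (adopt : U → ℕ)
    (Y0 : U → ℕ → ℝ) (u t' : ℕ) : ℝ :=
  (avgAt14 Y0 (Finset.univ.filter (fun i => adopt i = u)) t'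
      - avgAt14 Y0 (Finset.univ.filter (fun i => adopt i = u)) (u - 1))
    - (avgAt14 Y0 (Finset.univ.filter (fun i => u < adopt i)) t'
      - avgAt14 Y0 (Finset.univ.filter (fun i => u < adopt i)) (u - 1))

/-- Adjustment weight of the cohort adopting at `u`:
`w_u = N_u / (N_u + |{j : adopt j > u}|)`, i.e. `N_k / (Σ_{j=k}^G N_j + N_∞)`. -/
noncomputable def weight14 {U : Type*} [Fintype U] (adopt : U → ℕ) (u : ℕ) : ℝ :=
  ((Finset.univ.filter (fun i : U => adopt i = u)).card : ℝ) /
    (((Finset.univ.filter (fun i : U => adopt i = u)).card : ℝ) +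
      ((Finset.univ.filter (fun i : U => u < adopt i)).card : ℝ))

open scoped BigOperators

namespace Finset

theorem expect_union_sub_expect_right {ι K : Type*} [Field K] [CharZero K] [DecidableEq ι]
    {s t : Finset ι} (h : Disjoint s t) (f : ι → K) :
    𝔼 i ∈ s ∪ t, f i - 𝔼 i ∈ t, f i =
      #s / (#s + #t) * (𝔼 i ∈ s, f i - 𝔼 i ∈ t, f i) := by
  have hsum : ((#s : K) + #t) * 𝔼 i ∈ s ∪ t, f i =
      #s * 𝔼 i ∈ s, f i + #t * 𝔼 i ∈ t, f i := by
    rw [← Nat.cast_add, ← card_union_of_disjoint h]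
    simp only [card_mul_expect, sum_union h]
  rcases eq_or_ne ((#s : K) + #t) 0 with h0 | h0
  · obtain ⟨hs, ht⟩ := add_eq_zero.mp (by exact_mod_cast h0 : #s + #t = 0)
    simp [card_eq_zero.mp hs, card_eq_zero.mp ht]
  · field_simp
    linear_combination hsum

end Finset

namespace StaggeredAdoption

variable {U : Type*} [Fintype U] (adopt : U → ℕ) (Y0 : U → ℕ → ℝ)

def cohort (u : ℕ) : Finset U := univ.filter (fun i => adopt i = u)

def notYetTreated (u : ℕ) : Finset U := univ.filter (fun i => u < adopt i)

omit [Fintype U] in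
noncomputable def trend (A : Finset U) (t t' : ℕ) : ℝ :=
  avgAt14 Y0 A t - avgAt14 Y0 A t'

omit [Fintype U] in
theorem trend_eq_expect (A : Finset U) (t t' : ℕ) :
    trend Y0 A t t' = 𝔼 i ∈ A, (Y0 i t - Y0 i t') := by
  rw [trend, avgAt14, avgAt14, expect_sub_distrib, expect_eq_sum_div_card,
    expect_eq_sum_div_card]

theorem notYetTreated_eq_cohort_union [DecidableEq U] (u : ℕ) :
    notYetTreated adopt u = cohort adopt (u + 1) ∪ notYetTreated adopt (u + 1) := by
  ext i
  simp only [notYetTreated, cohort, mem_union, mem_filter, mem_univ, true_and]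
  omega

theorem disjoint_cohort_notYetTreated (u : ℕ) :
    Disjoint (cohort adopt u) (notYetTreated adopt u) :=
  disjoint_filter.mpr fun _ _ h => by omega

theorem trend_notYetTreated_sub_succ (u t t' : ℕ) :
    trend Y0 (notYetTreated adopt u) t t' - trend Y0 (notYetTreated adopt (u + 1)) t t' =
      weight14 adopt (u + 1) *
        (trend Y0 (cohort adopt (u + 1)) t t' - trend Y0 (notYetTreated adopt (u + 1)) t t') := by
  classical
  simp only [trend_eq_expect]
  rw [notYetTreated_eq_cohort_union,
    expect_union_sub_expect_right (disjoint_cohort_notYetTreated adopt (u + 1))]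
  rfl

theorem trend_notYetTreated_sub_eq_sum {m n : ℕ} (hmn : m ≤ n) (t t' : ℕ) :
    trend Y0 (notYetTreated adopt m) t t' - trend Y0 (notYetTreated adopt n) t t' =
      ∑ u ∈ Ioc m n, weight14 adopt u *
        (trend Y0 (cohort adopt u) t t' - trend Y0 (notYetTreated adopt u) t t') := by
  induction n, hmn using Nat.le_induction with
  | base => simp
  | succ n hmn ih =>
    rw [sum_Ioc_succ_top hmn, ← ih, ← trend_notYetTreated_sub_succ]
    ring

theorem blockBiasCS_sub_blockBiasCS (u t t' : ℕ) :
    blockBiasCS adopt Y0 u t - blockBiasCS adopt Y0 u t' =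
      trend Y0 (cohort adopt u) t t' - trend Y0 (notYetTreated adopt u) t t' := by
  simp only [blockBiasCS, trend, cohort, notYetTreated]
  ring

end StaggeredAdoption

open StaggeredAdoption in
theorem csnyt_bias_decomposition_general {U : Type*} [Fintype U]
    (adopt : U → ℕ) (Y0 : U → ℕ → ℝ) (tg s : ℕ) (hs : 1 ≤ s) :
    (avgAt14 Y0 (Finset.univ.filter (fun i => adopt i = tg)) (tg + s - 1)
        - avgAt14 Y0 (Finset.univ.filter (fun i => adopt i = tg)) (tg - 1))
      - (avgAt14 Y0 (Finset.univ.filter (fun i => tg + s - 1 < adopt i)) (tg + s - 1)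
        - avgAt14 Y0 (Finset.univ.filter (fun i => tg + s - 1 < adopt i)) (tg - 1))
    = blockBiasCS adopt Y0 tg (tg + s - 1)
      + ∑ u ∈ Finset.Ioc tg (tg + s - 1),
          weight14 adopt u *
            (blockBiasCS adopt Y0 u (tg + s - 1) - blockBiasCS adopt Y0 u (tg - 1)) := by
  simp only [blockBiasCS_sub_blockBiasCS]
  rw [← trend_notYetTreated_sub_eq_sum adopt Y0 (by omega : tg ≤ tg + s - 1)]
  simp only [blockBiasCS, trend, notYetTreated]
  ring

/-- Bias decomposition for the Callaway–Sant'Anna not-yet-treated estimator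
(Proposition 2): the overall bias of cohort `G_g` (adopting at `tg`) at
post-treatment period `s` (calendar time `t = tg + s − 1`), defined against the
not-yet-treated control group `{j : t < adopt j}` with reference period `tg − 1`,
equals its own block bias plus the weighted sum over adjustment cohorts `u ∈ (tg,t]`
of the difference of two of their block biases (evaluated at `t` and at `tg − 1`). -/
theorem csnyt_bias_decomposition {U : Type*} [Fintype U] [DecidableEq U]
    (T : ℕ) (adopt : U → ℕ) (Y0 : U → ℕ → ℝ)
    (hadopt : ∀ i, 2 ≤ adopt i)
    (hnever : ∃ j, T < adopt j)
    (tg s : ℕ) (htgT : tg ≤ T) (hcoh : ∃ i, adopt i = tg)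
    (hs : 1 ≤ s) (ht : tg + s - 1 ≤ T) :
    (avgAt14 Y0 (Finset.univ.filter (fun i => adopt i = tg)) (tg + s - 1)
        - avgAt14 Y0 (Finset.univ.filter (fun i => adopt i = tg)) (tg - 1))
      - (avgAt14 Y0 (Finset.univ.filter (fun i => tg + s - 1 < adopt i)) (tg + s - 1)
        - avgAt14 Y0 (Finset.univ.filter (fun i => tg + s - 1 < adopt i)) (tg - 1))
    = blockBiasCS adopt Y0 tg (tg + s - 1)
      + ∑ u ∈ Finset.Ioc tg (tg + s - 1),
          weight14 adopt u *
            (blockBiasCS adopt Y0 u (tg + s - 1) - blockBiasCS adopt Y0 u (tg - 1)) :=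
  csnyt_bias_decomposition_general adopt Y0 tg s hs
end
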